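/- For all t > 0, x > 0, and λ ≥ 0, with p(t,x,y) = (1/√(2π t x)) e^{−(x+y)/(2t)} sinh(√(xy)/t), one has ∫_0^∞ e^{−λ y} p(t,x,y) dy = (1+2λt)^{−3/2} exp( −λx/(1+2λt) ). In particular ∫_0^∞ p(t,x,y) dy = 1. -/

import Mathlib

/-!
Substituting `y = u ^ 2` turns the Laplace transform of `p(t, x, ·)` into a constant multiple of
`∫ u in Ioi 0, u * sinh (b * u) * exp (-a * u ^ 2)` with `a = (1 + 2 λ t) / (2 t)` and
`b = √x / t`. The integrand is even, so this is half of `∫ u, u * exp (-a * u ^ 2 + b * u)`,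
a first Gaussian moment that completing the square reduces to `∫ v, exp (-a * v ^ 2) = √(π / a)`.
-/

open Real MeasureTheory Set

theorem integral_mul_exp_neg_mul_sq_eq_zero (a : ℝ) : ∫ v : ℝ, v * exp (-a * v ^ 2) = 0 := by
  have h := integral_neg_eq_self (fun v : ℝ => v * exp (-a * v ^ 2)) volume
  simp only [neg_sq, neg_mul, integral_neg] at h ⊢
  linarith

-- completing the square: `-a u² + b u = -a (u - b / (2a))² + b² / (4a)`
theorem mul_exp_neg_mul_sq_add_mul_eq {a : ℝ} (ha : a ≠ 0) (b u : ℝ) :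
    u * exp (-a * u ^ 2 + b * u) = exp (b ^ 2 / (4 * a)) *
      ((u - b / (2 * a)) * exp (-a * (u - b / (2 * a)) ^ 2)
        + b / (2 * a) * exp (-a * (u - b / (2 * a)) ^ 2)) := by
  rw [← add_mul, sub_add_cancel, mul_left_comm, ← exp_add]
  congr 2
  field_simp
  ring

theorem integrable_mul_exp_neg_mul_sq_add_mul {a : ℝ} (ha : 0 < a) (b : ℝ) :
    Integrable fun u : ℝ => u * exp (-a * u ^ 2 + b * u) := by
  simp_rw [mul_exp_neg_mul_sq_add_mul_eq ha.ne']
  exact (((integrable_mul_exp_neg_mul_sq ha).add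
    ((integrable_exp_neg_mul_sq ha).const_mul _)).comp_sub_right _).const_mul _

theorem integral_mul_exp_neg_mul_sq_add_mul {a : ℝ} (ha : 0 < a) (b : ℝ) :
    ∫ u : ℝ, u * exp (-a * u ^ 2 + b * u) = b / (2 * a) * √(π / a) * exp (b ^ 2 / (4 * a)) := by
  simp_rw [mul_exp_neg_mul_sq_add_mul_eq ha.ne']
  rw [integral_const_mul, integral_sub_right_eq_self (fun v =>
      v * exp (-a * v ^ 2) + b / (2 * a) * exp (-a * v ^ 2)),
    integral_add (integrable_mul_exp_neg_mul_sq ha) ((integrable_exp_neg_mul_sq ha).const_mul _),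
    integral_mul_exp_neg_mul_sq_eq_zero, integral_const_mul, integral_gaussian]
  ring

theorem integral_Ioi_mul_sinh_mul_exp_neg_mul_sq {a : ℝ} (ha : 0 < a) (b : ℝ) :
    ∫ u in Ioi 0, u * sinh (b * u) * exp (-a * u ^ 2)
      = b / (4 * a) * √(π / a) * exp (b ^ 2 / (4 * a)) := by
  have hsinh : ∀ u : ℝ, u * sinh (b * u) * exp (-a * u ^ 2)
      = (u * exp (-a * u ^ 2 + b * u) - u * exp (-a * u ^ 2 + -b * u)) / 2 := by
    intro u
    rw [sinh_eq, exp_add, exp_add, neg_mul b]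
    ring
  have heven : ∀ u : ℝ, |u| * sinh (b * |u|) * exp (-a * |u| ^ 2)
      = u * sinh (b * u) * exp (-a * u ^ 2) := by
    intro u
    rcases abs_choice u with h | h <;> simp only [h, mul_neg, sinh_neg, neg_sq, neg_mul, neg_neg]
  have hfull : ∫ u, u * sinh (b * u) * exp (-a * u ^ 2)
      = b / (2 * a) * √(π / a) * exp (b ^ 2 / (4 * a)) := by
    simp_rw [hsinh]
    rw [integral_div, integral_sub (integrable_mul_exp_neg_mul_sq_add_mul ha b)
      (integrable_mul_exp_neg_mul_sq_add_mul ha (-b)), integral_mul_exp_neg_mul_sq_add_mul ha,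
      integral_mul_exp_neg_mul_sq_add_mul ha, neg_sq]
    ring
  have hhalf := integral_comp_abs (f := fun u => u * sinh (b * u) * exp (-a * u ^ 2))
  simp only [heven] at hhalf
  rw [hfull] at hhalf
  linear_combination -hhalf / 2

theorem integral_Ioi_comp_sq {E : Type*} [NormedAddCommGroup E] [NormedSpace ℝ E] (f : ℝ → E) :
    ∫ u in Ioi 0, (2 * u) • f (u ^ 2) = ∫ y in Ioi 0, f y := by
  rw [← integral_comp_rpow_Ioi_of_pos (g := f) two_pos]
  refine setIntegral_congr_fun measurableSet_Ioi fun u _ => ?_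
  norm_num

noncomputable def besq3Density (t x y : ℝ) : ℝ :=
  1 / √(2 * π * t * x) * exp (-(x + y) / (2 * t)) * sinh (√(x * y) / t)

theorem exp_mul_besq3Density_sq {t x : ℝ} (ht : 0 < t) (hx : 0 ≤ x) (lam : ℝ) {u : ℝ}
    (hu : 0 ≤ u) :
    exp (-lam * u ^ 2) * besq3Density t x (u ^ 2) = 1 / √(2 * π * t * x) * exp (-x / (2 * t))
      * (sinh (√x / t * u) * exp (-((1 + 2 * lam * t) / (2 * t)) * u ^ 2)) := by
  rw [besq3Density, sqrt_mul hx, sqrt_sq hu, mul_div_right_comm]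
  have hexp : exp (-lam * u ^ 2) * exp (-(x + u ^ 2) / (2 * t))
      = exp (-x / (2 * t)) * exp (-((1 + 2 * lam * t) / (2 * t)) * u ^ 2) := by
    rw [← exp_add, ← exp_add]
    congr 1
    field_simp
    ring
  linear_combination (1 / √(2 * π * t * x) * sinh (√x / t * u)) * hexp

theorem rpow_neg_three_halves {s : ℝ} (hs : 0 ≤ s) : s ^ (-(3 : ℝ) / 2) = (s * √s)⁻¹ := by
  rw [show (-(3 : ℝ) / 2) = -(1 + 1 / 2) by norm_num, rpow_neg hs, rpow_add' hs (by norm_num),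
    rpow_one, ← sqrt_eq_rpow]

theorem integral_exp_mul_besq3Density {t x lam : ℝ} (ht : 0 < t) (hx : 0 < x)
    (hs : 0 < 1 + 2 * lam * t) :
    ∫ y in Ioi 0, exp (-lam * y) * besq3Density t x y
      = (1 + 2 * lam * t) ^ (-(3 : ℝ) / 2) * exp (-lam * x / (1 + 2 * lam * t)) := by
  set s := 1 + 2 * lam * t
  have ha : 0 < s / (2 * t) := by positivity
  have hintegrand : ∀ u ∈ Ioi (0 : ℝ), (2 * u) • (exp (-lam * u ^ 2) * besq3Density t x (u ^ 2))
      = 2 / √(2 * π * t * x) * exp (-x / (2 * t))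
        * (u * sinh (√x / t * u) * exp (-(s / (2 * t)) * u ^ 2)) := fun u hu => by
    rw [smul_eq_mul, exp_mul_besq3Density_sq ht hx.le lam (le_of_lt hu)]
    ring
  rw [← integral_Ioi_comp_sq, setIntegral_congr_fun measurableSet_Ioi hintegrand,
    integral_const_mul, integral_Ioi_mul_sinh_mul_exp_neg_mul_sq ha]
  have hpre : 2 / √(2 * π * t * x) * ((√x / t) / (4 * (s / (2 * t))) * √(π / (s / (2 * t))))
      = s ^ (-(3 : ℝ) / 2) := by
    rw [rpow_neg_three_halves hs.le, show π / (s / (2 * t)) = (2 * π * t) / s by field_simp,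
      sqrt_div' _ hs.le, sqrt_mul' _ hx.le]
    have : 0 < √(2 * π * t) := by positivity
    have : 0 < √x := by positivity
    have : 0 < √s := by positivity
    field_simp
    ring
  have hexp : -x / (2 * t) + (√x / t) ^ 2 / (4 * (s / (2 * t))) = -lam * x / s := by
    rw [div_pow, sq_sqrt hx.le]
    field_simp
    ring
  rw [← hpre, ← hexp, exp_add]
  ring

theorem stmt_3 (t x lam : ℝ) (ht : 0 < t) (hx : 0 < x) (hlam : 0 ≤ lam)
    (p : ℝ → ℝ)
    (hp : ∀ y, p y = (1 / Real.sqrt (2 * π * t * x)) * Real.exp (-(x + y) / (2 * t))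
        * Real.sinh (Real.sqrt (x * y) / t)) :
    (∫ y in Set.Ioi (0 : ℝ), Real.exp (-lam * y) * p y)
      = (1 + 2 * lam * t) ^ (-(3 : ℝ) / 2) * Real.exp (-lam * x / (1 + 2 * lam * t))
    ∧ (∫ y in Set.Ioi (0 : ℝ), p y) = 1 := by
  obtain rfl : p = besq3Density t x := funext hp
  refine ⟨integral_exp_mul_besq3Density ht hx (by positivity), ?_⟩
  simpa using integral_exp_mul_besq3Density (lam := 0) ht hx (by norm_num)
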